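/- Let I be an index set, let (z_i)_{i∈I} be points of ℝ² and (r_i)_{i∈I} positive reals, let N be a natural number and let 0 < λ < 1. Assume that every point of ℝ² belongs to at most N of the open balls B(z_i, r_i), and that for all i, j ∈ I, if B(z_i, 2r_i) ∩ B(z_j, 2r_j) ≠ ∅ then r_i ≥ λ·r_j. Then there exists P ∈ ℕ, depending only on λ and N, such that for every i ∈ I the set {j ∈ I : B(z_j, r_j) ∩ B(z_i, 2r_i) ≠ ∅} has at most P elements; in particular, for every 0 < δ ≤ 1, each enlarged ball B(z_i, (1+δ)r_i) meets at most P of the original balls B(z_j, r_j). -/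
import Mathlib

open MeasureTheory Metric Set ENNReal

/-- Multiplicity bound: if finitely many measurable sets all sit inside `A` and every
point lies in at most `N` of them, then the sum of their measures is at most `N * μ A`. -/
lemma sum_measure_le_of_multiplicity {α : Type*} [MeasurableSpace α] (μ : Measure α)
    {I : Type} (T : Finset I) (s : I → Set α) (A : Set α) (hA : MeasurableSet A)
    (hs : ∀ j, MeasurableSet (s j)) (hsub : ∀ j ∈ T, s j ⊆ A) (N : ℕ)
    (hmul : ∀ x, ({j : I | x ∈ s j}).encard ≤ (N : ℕ∞)) :
    ∑ j ∈ T, μ (s j) ≤ N * μ A := by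
  classical
  calc ∑ j ∈ T, μ (s j)
      = ∑ j ∈ T, ∫⁻ x, (s j).indicator 1 x ∂μ := by
        simp_rw [lintegral_indicator_one (hs _)]
    _ = ∫⁻ x, ∑ j ∈ T, (s j).indicator 1 x ∂μ := by
        rw [lintegral_finset_sum]
        exact fun j _ => measurable_one.indicator (hs j)
    _ ≤ ∫⁻ x, A.indicator (fun _ => (N : ENNReal)) x ∂μ := by
        refine lintegral_mono fun x => ?_
        show ∑ j ∈ T, (s j).indicator 1 x ≤ A.indicator (fun _ => (N : ENNReal)) x
        by_cases hx : x ∈ A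
        · rw [Set.indicator_of_mem hx]
          have h1 : ∑ j ∈ T, (s j).indicator 1 x
              = ∑ j ∈ T.filter (fun j => x ∈ s j), (1 : ENNReal) := by
            rw [Finset.sum_filter]
            refine Finset.sum_congr rfl fun j _ => ?_
            by_cases h : x ∈ s j <;> simp [h]
          rw [h1, Finset.sum_const, nsmul_eq_mul, mul_one]
          have h2 : ((T.filter (fun j => x ∈ s j) : Finset I) : Set I)
              ⊆ {j : I | x ∈ s j} := by
            intro j hj
            exact (by simpa using hj : j ∈ T ∧ x ∈ s j).2
          have h3 := (Set.encard_le_encard h2).trans (hmul x)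
          rw [Set.encard_coe_eq_coe_finsetCard] at h3
          exact_mod_cast h3
        · rw [Set.indicator_of_notMem hx]
          have : ∀ j ∈ T, (s j).indicator (1 : α → ENNReal) x = 0 := fun j hj =>
            Set.indicator_of_notMem (fun h => hx (hsub j hj h)) _
          simp [Finset.sum_eq_zero this]
    _ = N * μ A := by rw [lintegral_indicator_const hA]

/-- Enlargement lemma: for a family of planar open balls with multiplicity at most `N`
whose doubled balls have comparable radii when they intersect (ratio at least `lam`),
there is `P` depending only on `lam` and `N` such that each doubled ball
`B(z_i, 2 r_i)` meets at most `P` of the balls `B(z_j, r_j)`; in particular for every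
`0 < δ ≤ 1` each enlarged ball `B(z_i, (1+δ) r_i)` meets at most `P` of the balls. -/
theorem whitney_besicovitch_enlargement
    (lam : ℝ) (hlam0 : 0 < lam) (hlam1 : lam < 1) (N : ℕ) :
    ∃ P : ℕ, ∀ (I : Type) (z : I → EuclideanSpace ℝ (Fin 2)) (r : I → ℝ),
      (∀ i, 0 < r i) →
      (∀ x : EuclideanSpace ℝ (Fin 2),
        {i : I | x ∈ Metric.ball (z i) (r i)}.encard ≤ (N : ℕ∞)) →
      (∀ i j : I, (Metric.ball (z i) (2 * r i) ∩ Metric.ball (z j) (2 * r j)).Nonempty →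
        lam * r j ≤ r i) →
      ∀ i : I,
        ({j : I | (Metric.ball (z j) (r j) ∩ Metric.ball (z i) (2 * r i)).Nonempty}.encard
            ≤ (P : ℕ∞)) ∧
        (∀ δ : ℝ, 0 < δ → δ ≤ 1 →
          {j : I | (Metric.ball (z j) (r j) ∩
              Metric.ball (z i) ((1 + δ) * r i)).Nonempty}.encard ≤ (P : ℕ∞)) := by
  refine ⟨Nat.ceil (16 * N / lam ^ 4), fun I z r hr hmul hcomp i => ?_⟩
  set P : ℕ := Nat.ceil (16 * N / lam ^ 4) with hP
  set S : Set I :=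
    {j : I | (Metric.ball (z j) (r j) ∩ Metric.ball (z i) (2 * r i)).Nonempty} with hS
  have hri : 0 < r i := hr i
  set R : ℝ := 4 * r i / lam with hR
  have hRpos : 0 < R := by positivity
  have key : ∀ j ∈ S, lam * r i ≤ r j ∧ ball (z j) (r j) ⊆ ball (z i) R := by
    intro j hj
    obtain ⟨x, hxj, hxi⟩ := hj
    have hdbl : (ball (z j) (2 * r j) ∩ ball (z i) (2 * r i)).Nonempty :=
      ⟨x, ball_subset_ball (by nlinarith [hr j]) hxj, hxi⟩
    have h1 : lam * r i ≤ r j := hcomp j i hdbl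
    have h2 : lam * r j ≤ r i := hcomp i j ⟨x, hxi, ball_subset_ball (by nlinarith [hr j]) hxj⟩
    have hxj' : dist (z j) x < r j := by rw [dist_comm]; exact mem_ball.1 hxj
    have hxi' : dist x (z i) < 2 * r i := mem_ball.1 hxi
    have hdist : dist (z j) (z i) ≤ 2 * r i + r j :=
      le_of_lt (lt_of_le_of_lt (dist_triangle (z j) x (z i)) (by linarith))
    refine ⟨h1, ball_subset_ball' ?_⟩
    have hrj : r j ≤ r i / lam := by
      rw [le_div_iff₀ hlam0]; nlinarith
    have h4 : r i ≤ r i / lam := by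
      rw [le_div_iff₀ hlam0]; nlinarith
    have : r j + (2 * r i + r j) ≤ R := by
      rw [hR]
      calc r j + (2 * r i + r j) ≤ 4 * (r i / lam) := by linarith
        _ = 4 * r i / lam := by ring
    linarith
  -- finite subsets of S have card ≤ P
  have hfin : ∀ T : Finset I, ↑T ⊆ S → T.card ≤ P := by
    intro T hT
    have hsum := sum_measure_le_of_multiplicity (volume : Measure (EuclideanSpace ℝ (Fin 2))) T
      (fun j => ball (z j) (r j)) (ball (z i) R) measurableSet_ball
      (fun j => measurableSet_ball) (fun j hj => (key j (hT hj)).2) N hmul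
    have hvol : ∀ j ∈ T,
        ENNReal.ofReal ((lam * r i) ^ 2) * volume (ball (0 : EuclideanSpace ℝ (Fin 2)) 1)
        ≤ volume (ball (z j) (r j)) := by
      intro j hj
      rw [Measure.addHaar_ball _ _ (le_of_lt (hr j)), finrank_euclideanSpace_fin]
      gcongr
      exact (key j (hT hj)).1
    have hRvol : volume (ball (z i) R)
        = ENNReal.ofReal (R ^ 2) * volume (ball (0 : EuclideanSpace ℝ (Fin 2)) 1) := by
      rw [Measure.addHaar_ball _ _ hRpos.le, finrank_euclideanSpace_fin]
    have hcomb : (T.card : ENNReal) * ENNReal.ofReal ((lam * r i) ^ 2)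
          * volume (ball (0 : EuclideanSpace ℝ (Fin 2)) 1)
        ≤ (N : ENNReal) * ENNReal.ofReal (R ^ 2)
          * volume (ball (0 : EuclideanSpace ℝ (Fin 2)) 1) := by
      calc (T.card : ENNReal) * ENNReal.ofReal ((lam * r i) ^ 2)
            * volume (ball (0 : EuclideanSpace ℝ (Fin 2)) 1)
          = ∑ _j ∈ T, ENNReal.ofReal ((lam * r i) ^ 2)
            * volume (ball (0 : EuclideanSpace ℝ (Fin 2)) 1) := by
            rw [Finset.sum_const, nsmul_eq_mul, mul_assoc]
        _ ≤ ∑ j ∈ T, volume (ball (z j) (r j)) := Finset.sum_le_sum hvol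
        _ ≤ N * volume (ball (z i) R) := hsum
        _ = (N : ENNReal) * ENNReal.ofReal (R ^ 2)
            * volume (ball (0 : EuclideanSpace ℝ (Fin 2)) 1) := by
            rw [hRvol, mul_assoc]
    have hc0 : volume (ball (0 : EuclideanSpace ℝ (Fin 2)) 1) ≠ 0 :=
      (measure_ball_pos _ _ one_pos).ne'
    have hctop : volume (ball (0 : EuclideanSpace ℝ (Fin 2)) 1) ≠ ⊤ := measure_ball_lt_top.ne
    have hcancel : (T.card : ENNReal) * ENNReal.ofReal ((lam * r i) ^ 2)
        ≤ (N : ENNReal) * ENNReal.ofReal (R ^ 2) :=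
      (ENNReal.mul_le_mul_iff_left hc0 hctop).1 hcomb
    have hreal : (T.card : ℝ) * (lam * r i) ^ 2 ≤ (N : ℝ) * R ^ 2 := by
      have h1 : ENNReal.ofReal ((T.card : ℝ) * (lam * r i) ^ 2)
          ≤ ENNReal.ofReal ((N : ℝ) * R ^ 2) := by
        rw [ENNReal.ofReal_mul (by positivity), ENNReal.ofReal_mul (by positivity),
          ENNReal.ofReal_natCast, ENNReal.ofReal_natCast]
        exact hcancel
      exact (ENNReal.ofReal_le_ofReal_iff (by positivity)).1 h1
    have hbound : (T.card : ℝ) ≤ 16 * N / lam ^ 4 := by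
      rw [hR, div_pow] at hreal
      have hl4 : (0:ℝ) < lam ^ 4 := by positivity
      have hl2 : (0:ℝ) < lam ^ 2 := by positivity
      have hr2 : (0:ℝ) < r i ^ 2 := by positivity
      rw [le_div_iff₀ hl4]
      have h3 := mul_le_mul_of_nonneg_right hreal hl2.le
      rw [mul_assoc ((N:ℝ)), div_mul_cancel₀ _ hl2.ne'] at h3
      have h5 : ((T.card : ℝ) * lam ^ 4) * r i ^ 2 ≤ (16 * N) * r i ^ 2 := by nlinarith [h3]
      exact le_of_mul_le_mul_right h5 hr2
    have : (T.card : ℝ) ≤ (P : ℝ) := hbound.trans (Nat.le_ceil _)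
    exact_mod_cast this
  have hSenc : S.encard ≤ (P : ℕ∞) := by
    by_contra hcon
    push_neg at hcon
    have : ((P : ℕ∞) + 1) ≤ S.encard := Order.add_one_le_of_lt hcon
    obtain ⟨t, hts, htc⟩ := Set.exists_subset_encard_eq this
    have htc' : t.encard = ((P + 1 : ℕ) : ℕ∞) := by rw [htc]; push_cast; ring
    have htfin : t.Finite := Set.finite_of_encard_eq_coe htc'
    have hle := hfin htfin.toFinset (by simpa using hts)
    have hcard : (htfin.toFinset.card : ℕ∞) = t.encard := by
      rw [← Set.encard_coe_eq_coe_finsetCard, htfin.coe_toFinset]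
    rw [htc'] at hcard
    have : htfin.toFinset.card = P + 1 := by exact_mod_cast hcard
    omega
  refine ⟨hSenc, fun δ hδ0 hδ1 => ?_⟩
  refine le_trans (Set.encard_le_encard ?_) hSenc
  intro j hj
  obtain ⟨x, hx1, hx2⟩ := hj
  exact ⟨x, hx1, ball_subset_ball (by nlinarith) hx2⟩
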